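/- arXiv:0905.0215 — 5 statements merged into one kernel-verified Lean document; each statement's English description precedes it below -/
import Mathlib

section
/- The alternating series of central binomial coefficients ∑_{n=1}^∞ (-1)^{n+1} · C(2n, n) / (n · 4^n) converges and equals 2 · log((√2 + 1)/2). -/
/-!
With `c n = C(2n, n) / 4 ^ n` (`centralBinomRatio`), the binomial series gives
`∑ (-1)ⁿ c n xⁿ = 1 / √(1 + x)` for `|x| < 1`. Integrating term by term,
`∑_{n ≥ 1} (-1)^(n+1) c n xⁿ / n` is the primitive of `(1 - 1 / √(1 + x)) / x` vanishing at `0`,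
namely `2 log ((1 + √(1 + x)) / 2)`. The recurrence `c (n + 1) (2n + 2) = c n (2n + 1)` gives
`c n / (n + 1) = 2 (c n - c (n + 1))`, so the series converges absolutely at `x = 1`, and Abel's
theorem identifies its sum with the value of the primitive at `1`.
-/

open Real Filter Set Topology

noncomputable def centralBinomRatio (n : ℕ) : ℝ := n.centralBinom / 4 ^ n

lemma centralBinomRatio_zero : centralBinomRatio 0 = 1 := by simp [centralBinomRatio]

lemma centralBinomRatio_succ (n : ℕ) :
    centralBinomRatio (n + 1) = centralBinomRatio n * (2 * n + 1) / (2 * n + 2) := by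
  have h : ((n : ℝ) + 1) * (n + 1).centralBinom = 2 * (2 * n + 1) * n.centralBinom := by
    exact_mod_cast Nat.succ_mul_centralBinom_succ n
  unfold centralBinomRatio
  field_simp
  rw [pow_succ]
  linear_combination 2 * 4 ^ n * h

lemma centralBinomRatio_pos (n : ℕ) : 0 < centralBinomRatio n := by
  unfold centralBinomRatio
  have := n.centralBinom_pos
  positivity

lemma centralBinomRatio_sub_succ (n : ℕ) :
    centralBinomRatio n - centralBinomRatio (n + 1) = centralBinomRatio n / (2 * n + 2) := by
  rw [centralBinomRatio_succ]
  field_simp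
  ring

lemma antitone_centralBinomRatio : Antitone centralBinomRatio :=
  antitone_nat_of_succ_le fun n => by
    have := centralBinomRatio_sub_succ n
    have : 0 ≤ centralBinomRatio n / (2 * n + 2) :=
      div_nonneg (centralBinomRatio_pos n).le (by positivity)
    linarith

lemma centralBinomRatio_le_one (n : ℕ) : centralBinomRatio n ≤ 1 :=
  centralBinomRatio_zero ▸ antitone_centralBinomRatio n.zero_le

lemma summable_neg_one_pow_mul_centralBinomRatio_succ_div :
    Summable fun n : ℕ => (-1) ^ n * centralBinomRatio (n + 1) / (n + 1) := by
  have htel : ∀ n : ℕ, centralBinomRatio n / (n + 1) =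
      2 * (centralBinomRatio n - centralBinomRatio (n + 1)) := fun n => by
    rw [centralBinomRatio_sub_succ]
    field_simp
  have hsum : Summable fun n : ℕ => centralBinomRatio n / (n + 1) := by
    simp_rw [htel]
    refine .mul_left 2 (summable_of_sum_range_le (c := 1) (fun n => sub_nonneg.2 ?_) fun n => ?_)
    · exact antitone_centralBinomRatio n.le_succ
    · rw [Finset.sum_range_sub', centralBinomRatio_zero]
      linarith [centralBinomRatio_pos n]
  refine hsum.of_norm_bounded fun n => ?_
  rw [norm_div, norm_mul, norm_pow, norm_neg, norm_one, one_pow, one_mul, Real.norm_of_nonneg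
    (centralBinomRatio_pos _).le, Real.norm_of_nonneg (by positivity)]
  gcongr
  exact antitone_centralBinomRatio n.le_succ

theorem Ring.choose_succ_mul {R : Type*} [Field R] [CharZero R] (a : R) (n : ℕ) :
    Ring.choose a (n + 1) * (n + 1) = Ring.choose a n * (a - n) := by
  rw [Ring.choose_eq_smul, Ring.choose_eq_smul, descPochhammer_succ_right, Polynomial.smeval_mul]
  simp only [Nat.factorial_succ, Nat.cast_mul, Nat.cast_add, Nat.cast_one, mul_inv_rev,
    Polynomial.smeval_sub, Polynomial.smeval_X, pow_one, Polynomial.smeval_natCast, pow_zero,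
    nsmul_eq_mul, mul_one, smul_eq_mul]
  field_simp

lemma Ring.choose_neg_one_div_two (n : ℕ) :
    Ring.choose (-1 / 2 : ℝ) n = (-1) ^ n * centralBinomRatio n := by
  induction n with
  | zero => simp [centralBinomRatio_zero]
  | succ n ih =>
    have h := Ring.choose_succ_mul (-1 / 2 : ℝ) n
    rw [ih] at h
    have hn : (n : ℝ) + 1 ≠ 0 := by positivity
    rw [← mul_left_inj' hn, h, centralBinomRatio_succ, pow_succ]
    field_simp
    ring

lemma hasSum_neg_one_pow_mul_centralBinomRatio_mul_pow {x : ℝ} (hx : |x| < 1) :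
    HasSum (fun n => (-1) ^ n * centralBinomRatio n * x ^ n) (1 / √(1 + x)) := by
  have h := (one_add_rpow_hasFPowerSeriesOnBall_zero (a := -1 / 2)).hasSum
    (by simpa [enorm_eq_nnnorm, ← NNReal.coe_lt_one] using hx)
  have hsqrt : (1 + x) ^ (-1 / 2 : ℝ) = 1 / √(1 + x) := by
    rw [neg_div, rpow_neg (by linarith [abs_lt.1 hx]), sqrt_eq_rpow, inv_eq_one_div]
  simpa [binomialSeries, FormalMultilinearSeries.ofScalars, Ring.choose_neg_one_div_two, hsqrt]
    using h

lemma hasSum_neg_one_pow_mul_centralBinomRatio_succ_mul_pow {x : ℝ} (hx : |x| < 1) :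
    HasSum (fun n => (-1) ^ n * centralBinomRatio (n + 1) * x ^ n)
      (1 / (√(1 + x) * (1 + √(1 + x)))) := by
  have h1x : 0 < 1 + x := by linarith [abs_lt.1 hx]
  rcases eq_or_ne x 0 with rfl | hx0
  · convert hasSum_single (f := fun n => (-1) ^ n * centralBinomRatio (n + 1) * (0 : ℝ) ^ n) 0
      fun n hn => by simp [hn] using 1
    norm_num [centralBinomRatio_succ, centralBinomRatio_zero]
  · have h := (hasSum_nat_add_iff' 1).2 (hasSum_neg_one_pow_mul_centralBinomRatio_mul_pow hx)
    rw [Finset.sum_range_one, pow_zero, pow_zero, centralBinomRatio_zero, mul_one, mul_one] at h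
    have hval : -x * (1 / (√(1 + x) * (1 + √(1 + x)))) = 1 / √(1 + x) - 1 := by
      field_simp
      linear_combination sq_sqrt h1x.le
    have hshift : (fun n => (-1) ^ (n + 1) * centralBinomRatio (n + 1) * x ^ (n + 1)) =
        fun n => -x * ((-1) ^ n * centralBinomRatio (n + 1) * x ^ n) := funext fun n => by ring
    rw [hshift, ← hval] at h
    exact (hasSum_mul_left_iff (neg_ne_zero.2 hx0)).1 h

theorem hasDerivAt_tsum_mul_pow_succ_div {a : ℕ → ℝ} {C : ℝ} (ha : ∀ n, |a n| ≤ C) {x : ℝ}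
    (hx : |x| < 1) :
    HasDerivAt (fun y => ∑' n : ℕ, a n * y ^ (n + 1) / (n + 1)) (∑' n : ℕ, a n * x ^ n) x := by
  obtain ⟨r, hxr, hr1⟩ := exists_between hx
  have hr0 : 0 < r := (abs_nonneg x).trans_lt hxr
  refine hasDerivAt_tsum_of_isPreconnected (u := fun n => C * r ^ n) (y₀ := (0 : ℝ))
    (t := Metric.ball 0 r) (g := fun n y => a n * y ^ (n + 1) / (n + 1))
    (g' := fun n y => a n * y ^ n)
    ((summable_geometric_of_lt_one hr0.le hr1).mul_left C) Metric.isOpen_ball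
    (convex_ball 0 r).isPreconnected (fun n y _ => ?_) (fun n y hy => ?_)
    (Metric.mem_ball_self hr0) (by simp) (by simpa using hxr)
  · refine (((hasDerivAt_pow (n + 1) y).const_mul (a n)).div_const ((n : ℝ) + 1)).congr_deriv ?_
    push_cast
    field_simp
  · have hyr : |y| ≤ r := (mem_ball_zero_iff.1 hy).le
    rw [norm_mul, norm_pow, Real.norm_eq_abs, Real.norm_eq_abs]
    exact mul_le_mul (ha n) (pow_le_pow_left₀ (abs_nonneg y) hyr n) (by positivity)
      ((abs_nonneg _).trans (ha n))

lemma hasDerivAt_two_mul_log_one_add_sqrt_div_two {x : ℝ} (hx : -1 < x) :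
    HasDerivAt (fun y => 2 * log ((1 + √(1 + y)) / 2)) (1 / (√(1 + x) * (1 + √(1 + x)))) x := by
  have h1x : 0 < 1 + x := by linarith
  have hsqrt := ((hasDerivAt_id' x).const_add 1).sqrt h1x.ne'
  refine ((((hsqrt.const_add 1).div_const 2).log (by positivity)).const_mul 2).congr_deriv ?_
  field_simp

lemma tsum_neg_one_pow_mul_centralBinomRatio_succ_mul_pow_succ_div {x : ℝ} (hx : |x| < 1) :
    ∑' n : ℕ, (-1) ^ n * centralBinomRatio (n + 1) * x ^ (n + 1) / (n + 1) =
      2 * log ((1 + √(1 + x)) / 2) := by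
  set F := fun y : ℝ => ∑' n : ℕ, (-1) ^ n * centralBinomRatio (n + 1) * y ^ (n + 1) / (n + 1)
  set G := fun y : ℝ => 2 * log ((1 + √(1 + y)) / 2)
  have hbound (n : ℕ) : |(-1) ^ n * centralBinomRatio (n + 1)| ≤ 1 := by
    rw [abs_mul, abs_pow, abs_neg, abs_one, one_pow, one_mul,
      abs_of_pos (centralBinomRatio_pos _)]
    exact centralBinomRatio_le_one _
  have hF : ∀ y ∈ Ioo (-1 : ℝ) 1, HasDerivAt F (1 / (√(1 + y) * (1 + √(1 + y)))) y :=
    fun y hy => by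
      have hy' : |y| < 1 := abs_lt.2 hy
      simpa only [(hasSum_neg_one_pow_mul_centralBinomRatio_succ_mul_pow hy').tsum_eq] using
        hasDerivAt_tsum_mul_pow_succ_div hbound hy'
  have hG : ∀ y ∈ Ioo (-1 : ℝ) 1, HasDerivAt G (1 / (√(1 + y) * (1 + √(1 + y)))) y :=
    fun y hy => hasDerivAt_two_mul_log_one_add_sqrt_div_two hy.1
  refine isOpen_Ioo.eqOn_of_deriv_eq isPreconnected_Ioo
    (fun y hy => (hF y hy).differentiableAt.differentiableWithinAt)
    (fun y hy => (hG y hy).differentiableAt.differentiableWithinAt)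
    (fun y hy => (hF y hy).deriv.trans (hG y hy).deriv.symm)
    (show (0 : ℝ) ∈ Ioo (-1) 1 by norm_num) (by simp [F, G]) (abs_lt.1 hx)

theorem Summable.hasSum_of_eventually_tsum_mul_pow_eq {a : ℕ → ℝ} {g : ℝ → ℝ} (ha : Summable a)
    (hg : ContinuousAt g 1) (h : ∀ᶠ x in 𝓝[<] 1, ∑' n, a n * x ^ n = g x) : HasSum a (g 1) := by
  have habel := Real.tendsto_tsum_powerSeries_nhdsWithin_lt ha.hasSum.tendsto_sum_nat
  rw [← tendsto_nhds_unique (habel.congr' h) (hg.tendsto.mono_left nhdsWithin_le_nhds)]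
  exact ha.hasSum

/-- The alternating series of central binomial coefficients
∑_{n=1}^∞ (-1)^{n+1} · C(2n, n) / (n · 4^n) converges and equals 2 · log((√2 + 1)/2). -/
theorem lehmer_corrected_1 :
    HasSum (fun n : ℕ =>
      (-1 : ℝ) ^ ((n + 1) + 1) * (Nat.choose (2 * (n + 1)) (n + 1) : ℝ) /
        ((n + 1 : ℝ) * 4 ^ (n + 1)))
      (2 * Real.log ((Real.sqrt 2 + 1) / 2)) := by
  have hterm : (fun n : ℕ => (-1 : ℝ) ^ ((n + 1) + 1) * (Nat.choose (2 * (n + 1)) (n + 1) : ℝ) /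
      ((n + 1 : ℝ) * 4 ^ (n + 1))) = fun n => (-1) ^ n * centralBinomRatio (n + 1) / (n + 1) := by
    ext n
    rw [centralBinomRatio, Nat.centralBinom_eq_two_mul_choose, pow_succ, pow_succ]
    field_simp
  have hg : ContinuousAt (fun x => 2 * log ((1 + √(1 + x)) / 2) / x) 1 := by
    fun_prop (disch := positivity)
  have hseries : ∀ᶠ x in 𝓝[<] (1 : ℝ),
      ∑' n : ℕ, (-1) ^ n * centralBinomRatio (n + 1) / (n + 1) * x ^ n =
        2 * log ((1 + √(1 + x)) / 2) / x := by
    filter_upwards [Ioo_mem_nhdsLT zero_lt_one] with x hx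
    have hx1 : |x| < 1 := abs_lt.2 ⟨by linarith [hx.1], hx.2⟩
    rw [eq_div_iff hx.1.ne', ← tsum_mul_right,
      ← tsum_neg_one_pow_mul_centralBinomRatio_succ_mul_pow_succ_div hx1]
    congr 1 with n
    ring
  rw [hterm]
  convert summable_neg_one_pow_mul_centralBinomRatio_succ_div.hasSum_of_eventually_tsum_mul_pow_eq
    hg hseries using 1
  norm_num [add_comm]
end

section
/- For every real number x with 0 < x ≤ 1/4, the series x · ∑_{n=1}^∞ C(2n, n) / (n(n+1)) · xⁿ converges and equals 2x · log((1 − √(1 − 4x))/x) + √(1 − 4x)/2 − x · (log 4 − 1) − 1/2. -/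
/-!
The binomial series for `(1 - 4y)^(-1/2)` gives `∑ C(2n,n) yⁿ = 1/√(1 - 4y)` for `|y| < 1/4`.
Integrating termwise twice, and checking the closed forms by differentiation with the help of
`4y = (1 - √(1 - 4y)) (1 + √(1 - 4y))`, gives on `[0, 1/4)`
`∑_{n ≥ 1} C(2n,n) yⁿ / n = -2 log((1 + √(1 - 4y))/2)` and
`∑_{n ≥ 1} C(2n,n) y^(n+1) / (n(n+1)) = -2y log((1 + √(1 - 4y))/2) + √(1 - 4y)/2 + y - 1/2`.
Since `C(2n,n) ≤ 4ⁿ`, the second series converges absolutely and uniformly on `[-1/4, 1/4]`, so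
the identity extends to `y = 1/4` by continuity. At `y = x > 0`, `(1 - √(1 - 4x))/x = 4/(1 + √(1 - 4x))`
turns the closed form into the stated one.
-/

open Real Set
open scoped Nat

theorem eq_of_hasDerivAt_eq_of_continuousOn {f g f' : ℝ → ℝ} {a b : ℝ} (hab : a ≤ b)
    (hf : ContinuousOn f (Icc a b)) (hg : ContinuousOn g (Icc a b))
    (hf' : ∀ y ∈ Ioo a b, HasDerivAt f (f' y) y) (hg' : ∀ y ∈ Ioo a b, HasDerivAt g (f' y) y)
    (hfg : f a = g a) : f b = g b := by
  rcases hab.eq_or_lt with rfl | hab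
  · exact hfg
  obtain ⟨c, -, hc⟩ := exists_hasDerivAt_eq_slope (f - g) (fun _ => 0) hab (hf.sub hg)
    fun y hy => by simpa using (hf' y hy).sub (hg' y hy)
  rw [eq_comm, div_eq_zero_iff, or_iff_left (sub_ne_zero.mpr hab.ne')] at hc
  simp only [Pi.sub_apply] at hc
  linarith

section PowerSeries

variable {a : ℕ → ℝ} (e : ℕ → ℕ) {r x : ℝ}

theorem abs_mul_pow_le_of_abs_le (c : ℝ) (k : ℕ) (hx : |x| ≤ r) : |c * x ^ k| ≤ |c| * r ^ k := by
  rw [abs_mul, abs_pow]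
  gcongr

theorem summable_mul_pow_of_abs_le (ha : Summable fun n => |a n| * r ^ e n) (hx : |x| ≤ r) :
    Summable fun n => a n * x ^ e n :=
  .of_norm_bounded ha fun _ => abs_mul_pow_le_of_abs_le _ _ hx

theorem continuousOn_tsum_mul_pow (ha : Summable fun n => |a n| * r ^ e n) :
    ContinuousOn (fun y => ∑' n, a n * y ^ e n) (Icc (-r) r) :=
  continuousOn_tsum (fun _ => (continuous_const.mul (continuous_pow _)).continuousOn) ha
    fun _ _ hy => abs_mul_pow_le_of_abs_le _ _ (abs_le.mpr hy)

theorem hasDerivAt_tsum_div_succ_mul_pow (ha : Summable fun n => |a n| * r ^ e n)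
    (hx : |x| < r) :
    HasDerivAt (fun y => ∑' n, a n / (e n + 1) * y ^ (e n + 1)) (∑' n, a n * x ^ e n) x := by
  have hr : 0 < r := (abs_nonneg x).trans_lt hx
  refine hasDerivAt_tsum_of_isPreconnected (g' := fun n y => a n * y ^ e n) ha isOpen_Ioo
    isPreconnected_Ioo (y₀ := 0) (fun n y _ => ?_) (fun _ y hy => ?_) ⟨neg_lt_zero.mpr hr, hr⟩
    (by simp) (abs_lt.mp hx)
  · refine ((hasDerivAt_pow (e n + 1) y).const_mul (a n / (e n + 1))).congr_deriv ?_
    rw [Nat.add_sub_cancel]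
    push_cast
    field_simp
  · exact abs_mul_pow_le_of_abs_le _ _ (abs_lt.mpr hy).le

theorem summable_abs_mul_pow_of_abs_le_four_pow (ha : ∀ n, |a n| ≤ 4 ^ (n + 1)) (k : ℕ)
    (hr0 : 0 ≤ r) (hr : r < 1 / 4) : Summable fun n => |a n| * r ^ (n + k) := by
  refine .of_nonneg_of_le (fun n => by positivity) (fun n => ?_)
    ((summable_geometric_of_lt_one (by positivity) (by linarith : 4 * r < 1)).mul_left 4)
  calc |a n| * r ^ (n + k) ≤ 4 ^ (n + 1) * r ^ n := by
        rw [pow_add]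
        gcongr
        · exact ha n
        · exact mul_le_of_le_one_right (by positivity) (pow_le_one₀ hr0 (by linarith))
    _ = 4 * (4 * r) ^ n := by ring

end PowerSeries

theorem hasDerivAt_sqrt_one_sub_four_mul {x : ℝ} (hx : x < 1 / 4) :
    HasDerivAt (fun y => √(1 - 4 * y)) (-2 / √(1 - 4 * x)) x := by
  have h := ((hasDerivAt_id' x).const_mul 4).const_sub 1 |>.sqrt (by linarith : 0 < 1 - 4 * x).ne'
  convert h using 1
  field_simp
  norm_num

theorem hasDerivAt_log_one_add_sqrt_one_sub_four_mul_div_two {x : ℝ} (hx : x < 1 / 4) :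
    HasDerivAt (fun y => log ((1 + √(1 - 4 * y)) / 2))
      (-2 / (√(1 - 4 * x) * (1 + √(1 - 4 * x)))) x := by
  have hs : 0 < √(1 - 4 * x) := sqrt_pos.mpr (by linarith)
  have h := (((hasDerivAt_sqrt_one_sub_four_mul hx).const_add 1).div_const 2).log (by positivity)
  convert h using 1
  field_simp

theorem ascPochhammer_eval_half_eq (n : ℕ) :
    (ascPochhammer ℝ n).eval (1 / 2) = n ! * Nat.centralBinom n / 4 ^ n := by
  induction n with
  | zero => simp
  | succ n ih =>
    have h : ((n + 1 : ℕ) : ℝ) * Nat.centralBinom (n + 1) = 2 * (2 * n + 1) * Nat.centralBinom n :=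
      mod_cast Nat.succ_mul_centralBinom_succ n
    rw [ascPochhammer_succ_eval, ih, Nat.factorial_succ, pow_succ]
    push_cast at h ⊢
    field_simp
    linear_combination -2 * h

theorem multichoose_half_eq_centralBinom_div_four_pow (n : ℕ) :
    Ring.multichoose (1 / 2 : ℝ) n = Nat.centralBinom n / 4 ^ n := by
  have h := Ring.factorial_nsmul_multichoose_eq_ascPochhammer (1 / 2 : ℝ) n
  rw [Polynomial.ascPochhammer_smeval_eq_eval, ascPochhammer_eval_half_eq, nsmul_eq_mul] at h
  have : (n ! : ℝ) ≠ 0 := by positivity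
  field_simp at h ⊢
  linear_combination h

theorem hasSum_centralBinom_mul_pow {x : ℝ} (hx : |x| < 1 / 4) :
    HasSum (fun n => (Nat.centralBinom n : ℝ) * x ^ n) (1 / √(1 - 4 * x)) := by
  have h4x : 4 * x ∈ Metric.eball (0 : ℝ) 1 := by
    rw [Metric.mem_eball, edist_zero_right, enorm_eq_ofReal_abs, ENNReal.ofReal_lt_one, abs_mul]
    norm_num
    linarith
  have h := (one_div_one_sub_rpow_hasFPowerSeriesOnBall_zero (1 / 2)).hasSum h4x
  have hterm (n : ℕ) :
      (Nat.centralBinom n : ℝ) / 4 ^ n * (4 * x) ^ n = Nat.centralBinom n * x ^ n := by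
    rw [mul_pow]
    field_simp
  simpa only [FormalMultilinearSeries.ofScalars_apply_eq, zero_add, ← Ring.multichoose_eq,
    multichoose_half_eq_centralBinom_div_four_pow, smul_eq_mul, ← sqrt_eq_rpow, hterm] using h

theorem hasSum_centralBinom_succ_mul_pow {x : ℝ} (hx : |x| < 1 / 4) (hx0 : x ≠ 0) :
    HasSum (fun n => (Nat.centralBinom (n + 1) : ℝ) * x ^ n)
      (4 / (√(1 - 4 * x) * (1 + √(1 - 4 * x)))) := by
  have hs : 0 < √(1 - 4 * x) := sqrt_pos.mpr (by linarith [le_abs_self x])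
  have hsq : √(1 - 4 * x) ^ 2 = 1 - 4 * x := sq_sqrt (by linarith [le_abs_self x])
  have h := ((hasSum_nat_add_iff' 1).mpr (hasSum_centralBinom_mul_pow hx)).div_const x
  simp only [Finset.sum_range_one, Nat.centralBinom_zero, pow_zero, Nat.cast_one, mul_one] at h
  have hterm (n : ℕ) :
      (Nat.centralBinom (n + 1) : ℝ) * x ^ (n + 1) / x = Nat.centralBinom (n + 1) * x ^ n := by
    rw [pow_succ, ← mul_assoc, mul_div_cancel_right₀ _ hx0]
  have hval : (1 / √(1 - 4 * x) - 1) / x = 4 / (√(1 - 4 * x) * (1 + √(1 - 4 * x))) := by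
    field_simp
    linear_combination -hsq
  simpa only [hterm, hval] using h

theorem abs_centralBinom_le_four_pow (n : ℕ) : |(Nat.centralBinom n : ℝ)| ≤ 4 ^ n := by
  rw [abs_of_nonneg (by positivity)]
  exact_mod_cast Nat.centralBinom_le_four_pow n

noncomputable def centralBinomLogSeries (y : ℝ) : ℝ :=
  ∑' n : ℕ, (Nat.centralBinom (n + 1) : ℝ) / (n + 1) * y ^ (n + 1)

/-- `∑_{n ≥ 1} C(2n,n) y^(n+1) / (n(n+1))`, written in the shape of
`hasDerivAt_tsum_div_succ_mul_pow` with `e n = n + 1`. -/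
noncomputable def lehmerSeries (y : ℝ) : ℝ :=
  ∑' n : ℕ, (Nat.centralBinom (n + 1) : ℝ) / (n + 1) / ((n + 1 : ℕ) + 1) * y ^ (n + 1 + 1)

theorem hasDerivAt_centralBinomLogSeries {x : ℝ} (hx : |x| < 1 / 4) :
    HasDerivAt centralBinomLogSeries (∑' n, (Nat.centralBinom (n + 1) : ℝ) * x ^ n) x := by
  obtain ⟨r, hxr, hr⟩ := exists_between hx
  exact hasDerivAt_tsum_div_succ_mul_pow (fun n => n)
    (summable_abs_mul_pow_of_abs_le_four_pow (fun n => abs_centralBinom_le_four_pow _) 0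
      ((abs_nonneg x).trans hxr.le) hr) hxr

theorem hasDerivAt_lehmerSeries {x : ℝ} (hx : |x| < 1 / 4) :
    HasDerivAt lehmerSeries (centralBinomLogSeries x) x := by
  obtain ⟨r, hxr, hr⟩ := exists_between hx
  refine hasDerivAt_tsum_div_succ_mul_pow (fun n => n + 1)
    (summable_abs_mul_pow_of_abs_le_four_pow (fun n => ?_) 1
      ((abs_nonneg x).trans hxr.le) hr) hxr
  rw [abs_div, abs_of_pos (by positivity : (0 : ℝ) < n + 1)]
  exact (div_le_self (abs_nonneg _) (by simp)).trans (abs_centralBinom_le_four_pow _)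

theorem centralBinomLogSeries_eq {x : ℝ} (hx0 : 0 ≤ x) (hx : x < 1 / 4) :
    centralBinomLogSeries x = -2 * log ((1 + √(1 - 4 * x)) / 2) := by
  have habs {y : ℝ} (hy : y ∈ Icc 0 x) : |y| < 1 / 4 := by
    rw [abs_of_nonneg hy.1]
    exact hy.2.trans_lt hx
  have hψ {y : ℝ} (hy : y < 1 / 4) : HasDerivAt (fun y => -2 * log ((1 + √(1 - 4 * y)) / 2))
      (4 / (√(1 - 4 * y) * (1 + √(1 - 4 * y)))) y :=
    ((hasDerivAt_log_one_add_sqrt_one_sub_four_mul_div_two hy).const_mul (-2)).congr_deriv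
      (by ring)
  refine eq_of_hasDerivAt_eq_of_continuousOn hx0
    (fun y hy => (hasDerivAt_centralBinomLogSeries (habs hy)).continuousAt.continuousWithinAt)
    (fun y hy => (hψ ((habs hy).trans_le' (le_abs_self y))).continuousAt.continuousWithinAt)
    (fun y hy => ?_) (fun y hy => hψ (hy.2.trans hx)) (by simp [centralBinomLogSeries])
  have hy4 := habs (Ioo_subset_Icc_self hy)
  rw [← (hasSum_centralBinom_succ_mul_pow hy4 hy.1.ne').tsum_eq]
  exact hasDerivAt_centralBinomLogSeries hy4

theorem summable_abs_lehmerSeries_coeff_mul_quarter_pow :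
    Summable fun n : ℕ =>
      |(Nat.centralBinom (n + 1) : ℝ) / (n + 1) / ((n + 1 : ℕ) + 1)| * (1 / 4) ^ (n + 1 + 1) := by
  have hsq : Summable fun n : ℕ => 1 / ((n : ℝ) + 1) ^ 2 := by
    simpa using (summable_nat_add_iff 1).mpr (summable_one_div_nat_pow.mpr one_lt_two)
  refine hsq.of_nonneg_of_le (fun n => by positivity) fun n => ?_
  have hc : (Nat.centralBinom (n + 1) : ℝ) ≤ 4 ^ (n + 1) :=
    mod_cast Nat.centralBinom_le_four_pow (n + 1)
  rw [abs_of_nonneg (by positivity)]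
  calc (Nat.centralBinom (n + 1) : ℝ) / (n + 1) / ((n + 1 : ℕ) + 1) * (1 / 4) ^ (n + 1 + 1)
      ≤ 4 ^ (n + 1) / (n + 1) / ((n + 1 : ℕ) + 1) * (1 / 4) ^ (n + 1 + 1) := by gcongr
    _ = 1 / (4 * ((n + 1) * (n + 2))) := by
        rw [one_div_pow, pow_succ, pow_succ]
        push_cast
        field_simp
        ring
    _ ≤ 1 / ((n : ℝ) + 1) ^ 2 := by
        gcongr
        nlinarith

theorem lehmerSeries_eq {x : ℝ} (hx0 : 0 ≤ x) (hx : x ≤ 1 / 4) :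
    lehmerSeries x =
      -2 * x * log ((1 + √(1 - 4 * x)) / 2) + √(1 - 4 * x) / 2 + x - 1 / 2 := by
  have hφ {y : ℝ} (hy : y < 1 / 4) : HasDerivAt
      (fun y => -2 * y * log ((1 + √(1 - 4 * y)) / 2) + √(1 - 4 * y) / 2 + y - 1 / 2)
      (-2 * log ((1 + √(1 - 4 * y)) / 2)) y := by
    have hs : 0 < √(1 - 4 * y) := sqrt_pos.mpr (by linarith)
    have hsq : √(1 - 4 * y) ^ 2 = 1 - 4 * y := sq_sqrt (by linarith)
    have h := ((((hasDerivAt_id' y).const_mul (-2)).mul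
      (hasDerivAt_log_one_add_sqrt_one_sub_four_mul_div_two hy)).add
      ((hasDerivAt_sqrt_one_sub_four_mul hy).div_const 2)).add (hasDerivAt_id' y) |>.sub_const
      (1 / 2)
    refine h.congr_deriv ?_
    field_simp
    linear_combination hsq
  have hlog : Continuous fun y : ℝ => log ((1 + √(1 - 4 * y)) / 2) :=
    (by fun_prop : Continuous fun y : ℝ => (1 + √(1 - 4 * y)) / 2).log fun y => by positivity
  refine eq_of_hasDerivAt_eq_of_continuousOn hx0
    ((continuousOn_tsum_mul_pow (fun n => n + 1 + 1)
      summable_abs_lehmerSeries_coeff_mul_quarter_pow).mono (Icc_subset_Icc (by norm_num) hx))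
    (by fun_prop) (fun y hy => ?_) (fun y hy => hφ (hy.2.trans_le hx)) (by simp)
  have hy4 : y < 1 / 4 := hy.2.trans_le hx
  rw [← centralBinomLogSeries_eq hy.1.le hy4]
  exact hasDerivAt_lehmerSeries (by rwa [abs_of_pos hy.1])

/-- For 0 < x ≤ 1/4, the series x · ∑_{n=1}^∞ C(2n,n)/(n(n+1)) · xⁿ converges and equals
2x·log((1 − √(1 − 4x))/x) + √(1 − 4x)/2 − x·(log 4 − 1) − 1/2. -/
theorem lehmer_corrected_eq7 (x : ℝ) (hx0 : 0 < x) (hx : x ≤ 1 / 4) :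
    HasSum (fun n : ℕ =>
      x * ((Nat.choose (2 * (n + 1)) (n + 1) : ℝ) / ((n + 1 : ℝ) * (n + 2 : ℝ)) * x ^ (n + 1)))
      (2 * x * Real.log ((1 - Real.sqrt (1 - 4 * x)) / x) + Real.sqrt (1 - 4 * x) / 2
        - x * (Real.log 4 - 1) - 1 / 2) := by
  have hsq : √(1 - 4 * x) ^ 2 = 1 - 4 * x := sq_sqrt (by linarith)
  have hterm (n : ℕ) : x * ((Nat.choose (2 * (n + 1)) (n + 1) : ℝ) / ((n + 1 : ℝ) * (n + 2 : ℝ))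
      * x ^ (n + 1)) =
        Nat.centralBinom (n + 1) / (n + 1) / ((n + 1 : ℕ) + 1) * x ^ (n + 1 + 1) := by
    rw [Nat.centralBinom_eq_two_mul_choose]
    push_cast
    field_simp
    ring
  have hquot : (1 - √(1 - 4 * x)) / x = 2 / ((1 + √(1 - 4 * x)) / 2) := by
    field_simp
    linear_combination -hsq
  have hval : 2 * x * log ((1 - √(1 - 4 * x)) / x) + √(1 - 4 * x) / 2 - x * (log 4 - 1) - 1 / 2
      = lehmerSeries x := by
    rw [lehmerSeries_eq hx0.le hx, hquot, log_div two_ne_zero (by positivity),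
      show (4 : ℝ) = 2 ^ 2 by norm_num, log_pow]
    push_cast
    ring
  simp only [hterm]
  rw [hval]
  exact (summable_mul_pow_of_abs_le (fun n => n + 1 + 1)
    summable_abs_lehmerSeries_coeff_mul_quarter_pow (by rwa [abs_of_pos hx0])).hasSum
end

section
/- The series ∑_{m=1}^∞ (-1)^{m-1} / (m · C(2m, m)) converges and equals 2 · log((1 + √5)/2) / √5. -/
/-!
Euler's beta integral gives
`∫₀¹ t^m (1-t)^(m+1) dt = m! (m+1)! / (2m+2)! = 1 / ((m+1) C(2m+2, m+1))`.
Summing the alternating series under the integral sign (the terms are dominated by `(1/4)^m`)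
leaves the geometric series `∑ (-t(1-t))^m (1-t) = (1-t)/(1+t-t²)`. Since
`1+t-t² = (t-ψ)(φ-t)` with `φ, ψ` the roots of `X² - X - 1`, partial fractions integrate this
to `2 log φ / √5`.
-/

open Real intervalIntegral
open scoped goldenRatio

theorem integral_pow_mul_one_sub_pow (a b : ℕ) :
    ∫ x in (0 : ℝ)..1, x ^ a * (1 - x) ^ b
      = a.factorial * b.factorial / (a + b + 1).factorial := by
  have hbeta : Complex.betaIntegral (a + 1) (b + 1)
      = ((∫ x in (0 : ℝ)..1, x ^ a * (1 - x) ^ b : ℝ) : ℂ) := by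
    rw [Complex.betaIntegral, ← integral_ofReal]
    refine integral_congr fun x _ => ?_
    simp only [add_sub_cancel_right, Complex.cpow_natCast]
    push_cast
    rfl
  have hpos (n : ℕ) : 0 < ((n : ℂ) + 1).re := by
    simpa only [Complex.add_re, Complex.natCast_re, Complex.one_re] using n.cast_add_one_pos
  have hGamma : Complex.betaIntegral (a + 1) (b + 1)
      = (a.factorial * b.factorial / (a + b + 1).factorial : ℝ) := by
    rw [Complex.betaIntegral_eq_Gamma_mul_div _ _ (hpos a) (hpos b),
      show (a : ℂ) + 1 + (b + 1) = ((a + b + 1 : ℕ) : ℂ) + 1 by push_cast; ring,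
      Complex.Gamma_nat_eq_factorial, Complex.Gamma_nat_eq_factorial,
      Complex.Gamma_nat_eq_factorial]
    push_cast
    rfl
  exact_mod_cast hbeta.symm.trans hGamma

theorem integral_pow_mul_one_sub_pow_succ (m : ℕ) :
    ∫ x in (0 : ℝ)..1, x ^ m * (1 - x) ^ (m + 1)
      = 1 / ((m + 1 : ℝ) * (Nat.choose (2 * (m + 1)) (m + 1) : ℝ)) := by
  have hchoose := Nat.add_choose_mul_factorial_mul_factorial (m + 1) (m + 1)
  rw [integral_pow_mul_one_sub_pow, show m + (m + 1) + 1 = m + 1 + (m + 1) by ring, ← hchoose,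
    ← two_mul, Nat.factorial_succ m]
  push_cast
  field_simp

theorem hasSum_neg_one_pow_mul_pow_mul_one_sub_pow {x : ℝ} (hx : |x * (1 - x)| < 1) :
    HasSum (fun m : ℕ => (-1) ^ m * (x ^ m * (1 - x) ^ (m + 1))) ((1 - x) / (1 + x - x ^ 2)) := by
  have hgeom := (hasSum_geometric_of_abs_lt_one (r := -(x * (1 - x))) (by rwa [abs_neg])).mul_right
    (1 - x)
  rw [inv_mul_eq_div, show 1 - -(x * (1 - x)) = 1 + x - x ^ 2 by ring] at hgeom
  have hterm (m : ℕ) :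
      (-(x * (1 - x))) ^ m * (1 - x) = (-1) ^ m * (x ^ m * (1 - x) ^ (m + 1)) := by
    rw [neg_eq_neg_one_mul, mul_pow, mul_pow]
    ring
  simpa only [hterm] using hgeom

theorem abs_neg_one_pow_mul_pow_mul_one_sub_pow_le {x : ℝ} (hx : x ∈ Set.Icc (0 : ℝ) 1)
    (m : ℕ) :
    |(-1) ^ m * (x ^ m * (1 - x) ^ (m + 1))| ≤ (1 / 4) ^ m := by
  obtain ⟨hx0, hx1⟩ := hx
  have hprod : x * (1 - x) ≤ 1 / 4 := by nlinarith [sq_nonneg (x - 1 / 2)]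
  rw [abs_mul, abs_pow, abs_neg, abs_one, one_pow, one_mul,
    abs_of_nonneg (by positivity : 0 ≤ x ^ m * (1 - x) ^ (m + 1))]
  calc x ^ m * (1 - x) ^ (m + 1) = (x * (1 - x)) ^ m * (1 - x) := by rw [mul_pow]; ring
    _ ≤ (1 / 4) ^ m * 1 := by gcongr; linarith
    _ = (1 / 4) ^ m := mul_one _

theorem hasSum_integral_neg_one_pow_mul_pow_mul_one_sub_pow :
    HasSum (fun m : ℕ => ∫ t in (0 : ℝ)..1, (-1) ^ m * (t ^ m * (1 - t) ^ (m + 1)))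
      (∫ t in (0 : ℝ)..1, (1 - t) / (1 + t - t ^ 2)) := by
  have hIoc : Set.uIoc (0 : ℝ) 1 ⊆ Set.Icc 0 1 := by
    rw [Set.uIoc_of_le zero_le_one]; exact Set.Ioc_subset_Icc_self
  refine hasSum_integral_of_dominated_convergence (fun m _ => (1 / 4 : ℝ) ^ m)
    (fun m => by fun_prop) (fun m => .of_forall fun t ht => ?_)
    (.of_forall fun _ _ => summable_geometric_of_lt_one (by norm_num) (by norm_num))
    intervalIntegrable_const (.of_forall fun t ht => ?_)
  · exact abs_neg_one_pow_mul_pow_mul_one_sub_pow_le (hIoc ht) m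
  · obtain ⟨ht0, ht1⟩ := hIoc ht
    refine hasSum_neg_one_pow_mul_pow_mul_one_sub_pow ?_
    rw [abs_of_nonneg (by nlinarith)]
    nlinarith

theorem hasDerivAt_log_partial_fractions {p q t : ℝ} (hpq : p + q = 1) (hq : q < t) (hp : t < p) :
    HasDerivAt (fun t => (p * log (t - q) - q * log (p - t)) / (p - q))
      ((1 - t) / ((t - q) * (p - t))) t := by
  have hq' : t - q ≠ 0 := (sub_pos.2 hq).ne'
  have hp' : p - t ≠ 0 := (sub_pos.2 hp).ne'
  have hpq' : p - q ≠ 0 := (sub_pos.2 (hq.trans hp)).ne'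
  refine ((((hasDerivAt_id' t).sub_const q).log hq').const_mul p |>.sub
    (((hasDerivAt_id' t).const_sub p).log hp' |>.const_mul q)).div_const (p - q) |>.congr_deriv ?_
  field_simp
  linear_combination (p - q) * hpq

theorem one_add_sub_sq_eq (t : ℝ) : 1 + t - t ^ 2 = (t - ψ) * (φ - t) := by
  linear_combination (-1 / 4 : ℝ) * sq_sqrt (show (0 : ℝ) ≤ 5 by norm_num)

theorem integral_one_sub_div_one_add_sub_sq :
    ∫ t in (0 : ℝ)..1, (1 - t) / (1 + t - t ^ 2) = 2 * log φ / √5 := by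
  have hderiv : ∀ t ∈ Set.uIcc (0 : ℝ) 1,
      HasDerivAt (fun t => (φ * log (t - ψ) - ψ * log (φ - t)) / (φ - ψ))
        ((1 - t) / (1 + t - t ^ 2)) t := by
    intro t ht
    rw [Set.uIcc_of_le zero_le_one] at ht
    rw [one_add_sub_sq_eq]
    exact hasDerivAt_log_partial_fractions goldenRatio_add_goldenConj
      (goldenConj_neg.trans_le ht.1) (ht.2.trans_lt one_lt_goldenRatio)
  rw [integral_eq_sub_of_hasDerivAt hderiv]
  · have hφ_sub_one : φ - 1 = φ⁻¹ := by rw [inv_goldenRatio, ← one_sub_goldenConj]; ring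
    rw [one_sub_goldenRatio, hφ_sub_one, zero_sub, sub_zero, ← inv_goldenRatio, log_inv,
      goldenRatio_sub_goldenConj]
    linear_combination (2 * log φ / √5) * goldenRatio_add_goldenConj
  · refine (ContinuousOn.div (by fun_prop) (by fun_prop) fun t ht => ?_).intervalIntegrable
    rw [Set.uIcc_of_le zero_le_one] at ht
    nlinarith [ht.1, ht.2]

/-- ∑_{m=1}^∞ (-1)^{m-1} / (m · C(2m, m)) converges and equals 2·log((1+√5)/2)/√5. -/
theorem lehmer_corrected_p453a :
    HasSum (fun m : ℕ =>
      (-1 : ℝ) ^ m / ((m + 1 : ℝ) * (Nat.choose (2 * (m + 1)) (m + 1) : ℝ)))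
      (2 * Real.log ((1 + Real.sqrt 5) / 2) / Real.sqrt 5) := by
  simpa only [integral_const_mul, integral_pow_mul_one_sub_pow_succ, mul_one_div,
    integral_one_sub_div_one_add_sub_sq] using hasSum_integral_neg_one_pow_mul_pow_mul_one_sub_pow
end

section
/- Let τ = (√3 − 1)/2. The series ∑_{m=1}^∞ 2^m · (2 − √3)^m / (m² · C(2m, m)) converges and equals 2 · (arcsin τ)². -/
/-! Expanding the integrand of `∫₀^{π/2} t sin θ / (1 - t² sin² θ) dθ = arcsin t / √(1 - t²)` as a
geometric series and integrating termwise with Wallis' formula gives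
`arcsin t / √(1 - t²) = ∑ 4ᵏ t^(2k+1) / ((2k+1) C(2k,k))` for `|t| < 1`. Since `4 arcsin t / √(1 - t²)`
is the derivative of `2 arcsin² t`, integrating once more over `[0, x]` yields
`2 arcsin² x = ∑_{m ≥ 1} (2x)^(2m) / (m² C(2m,m))`; at `x = τ` one has `(2τ)² = 2(2 - √3)`. -/

open Real Nat intervalIntegral Set

theorem hasSum_pow_two_mul_add_one {y : ℝ} (hy : |y| < 1) :
    HasSum (fun k : ℕ => y ^ (2 * k + 1)) (y / (1 - y ^ 2)) := by
  have hy2 : |y ^ 2| < 1 := by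
    rw [abs_pow]
    exact pow_lt_one₀ (abs_nonneg y) hy two_ne_zero
  have hodd : (fun k : ℕ => y ^ (2 * k + 1)) = fun k => y * (y ^ 2) ^ k :=
    funext fun k => by ring
  rw [hodd, div_eq_mul_inv]
  exact (hasSum_geometric_of_abs_lt_one hy2).mul_left y

theorem hasSum_intervalIntegral_of_norm_le_summable {ι E : Type*} [Countable ι]
    [NormedAddCommGroup E] [NormedSpace ℝ E] {F : ι → ℝ → E} {f : ℝ → E} {a b : ℝ}
    {u : ι → ℝ} (hF : ∀ i, Continuous (F i)) (hu : Summable u)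
    (h_bound : ∀ i, ∀ t ∈ uIoc a b, ‖F i t‖ ≤ u i)
    (h_lim : ∀ t ∈ uIoc a b, HasSum (fun i => F i t) (f t)) :
    HasSum (fun i => ∫ t in a..b, F i t) (∫ t in a..b, f t) :=
  hasSum_integral_of_dominated_convergence (fun i _ => u i)
    (fun i => (hF i).aestronglyMeasurable) (fun i => .of_forall (h_bound i))
    (.of_forall fun _ _ => hu) intervalIntegrable_const (.of_forall h_lim)

theorem cast_succ_mul_centralBinom_succ (k : ℕ) :
    ((k : ℝ) + 1) * centralBinom (k + 1) = 2 * (2 * k + 1) * centralBinom k := by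
  exact_mod_cast succ_mul_centralBinom_succ k

theorem integral_sin_pow_two_mul_add_one_zero_pi_div_two (k : ℕ) :
    ∫ θ in (0 : ℝ)..π / 2, sin θ ^ (2 * k + 1) = 4 ^ k / ((2 * k + 1) * centralBinom k) := by
  induction k with
  | zero => simp
  | succ k ih =>
    have hC := cast_succ_mul_centralBinom_succ k
    have hpos : (0 : ℝ) < centralBinom k := by exact_mod_cast centralBinom_pos k
    have hpos' : (0 : ℝ) < centralBinom (k + 1) := by exact_mod_cast centralBinom_pos (k + 1)
    rw [show 2 * (k + 1) + 1 = 2 * k + 1 + 2 by ring, integral_sin_pow, ih, sin_zero,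
      cos_pi_div_two, zero_pow (by omega)]
    push_cast
    field_simp
    linear_combination (2 * (2 * (k : ℝ) + 3) * 4 ^ k) * hC

theorem four_pow_div_two_mul_add_one_mul_centralBinom_le_one (k : ℕ) :
    (4 : ℝ) ^ k / ((2 * k + 1) * centralBinom k) ≤ 1 := by
  have hpos : (0 : ℝ) < centralBinom k := by exact_mod_cast centralBinom_pos k
  rw [div_le_one (by positivity)]
  rcases k.eq_zero_or_pos with rfl | hk
  · simp
  calc (4 : ℝ) ^ k ≤ 2 * k * centralBinom k := by
        exact_mod_cast four_pow_le_two_mul_self_mul_centralBinom k hk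
    _ ≤ (2 * k + 1) * centralBinom k := by gcongr; linarith

theorem abs_mul_sin_le (t θ : ℝ) : |t * sin θ| ≤ |t| := by
  rw [abs_mul]
  exact mul_le_of_le_one_right (abs_nonneg t) (abs_sin_le_one θ)

theorem integral_mul_sin_div_one_sub_sq {t : ℝ} (ht : |t| < 1) :
    ∫ θ in (0 : ℝ)..π / 2, t * sin θ / (1 - (t * sin θ) ^ 2) = arcsin t / √(1 - t ^ 2) := by
  have hden : ∀ θ, 0 < 1 - (t * sin θ) ^ 2 := fun θ => by
    rw [sub_pos, sq_lt_one_iff_abs_lt_one]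
    exact (abs_mul_sin_le t θ).trans_lt ht
  have ht2 : 0 < 1 - t ^ 2 := by simpa using hden (π / 2)
  set c := √(1 - t ^ 2)
  have hc : 0 < c := sqrt_pos.2 ht2
  have hc2 : c ^ 2 = 1 - t ^ 2 := sq_sqrt ht2.le
  have hderiv : ∀ θ ∈ uIcc (0 : ℝ) (π / 2), HasDerivAt (fun θ => -(arctan (t * cos θ / c) / c))
      (t * sin θ / (1 - (t * sin θ) ^ 2)) θ := fun θ _ => by
    have := (((hasDerivAt_arctan _).comp θ
      (((hasDerivAt_cos θ).const_mul t).div_const c)).div_const c).neg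
    refine this.congr_deriv ?_
    have : 1 - t ^ 2 * sin θ ^ 2 ≠ 0 := by rw [← mul_pow]; exact (hden θ).ne'
    field_simp
    linear_combination (-(t * sin θ)) * hc2 - (t ^ 3 * sin θ) * cos_sq' θ
  rw [integral_eq_sub_of_hasDerivAt hderiv
    ((Continuous.intervalIntegrable (by fun_prop (disch := exact fun θ => (hden θ).ne')) _ _)),
    arcsin_eq_arctan (abs_lt.1 ht)]
  simp [c]

theorem hasSum_arcsin_div_sqrt_one_sub_sq {t : ℝ} (ht : |t| < 1) :
    HasSum (fun k : ℕ => 4 ^ k / ((2 * k + 1) * centralBinom k) * t ^ (2 * k + 1))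
      (arcsin t / √(1 - t ^ 2)) := by
  rw [← integral_mul_sin_div_one_sub_sq ht]
  have hsum := hasSum_intervalIntegral_of_norm_le_summable (a := 0) (b := π / 2)
    (F := fun k θ => (t * sin θ) ^ (2 * k + 1)) (fun k => by fun_prop)
    (hasSum_pow_two_mul_add_one (by rwa [abs_abs])).summable
    (fun k θ _ => by
      rw [norm_pow, norm_eq_abs]
      exact pow_le_pow_left₀ (abs_nonneg _) (abs_mul_sin_le t θ) _)
    (fun θ _ => hasSum_pow_two_mul_add_one ((abs_mul_sin_le t θ).trans_lt ht))
  refine hsum.congr_fun fun k => ?_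
  simp_rw [mul_pow, integral_const_mul, integral_sin_pow_two_mul_add_one_zero_pi_div_two]
  ring

theorem integral_four_mul_arcsin_div_sqrt_one_sub_sq {x : ℝ} (hx : |x| < 1) :
    ∫ t in (0 : ℝ)..x, 4 * (arcsin t / √(1 - t ^ 2)) = 2 * arcsin x ^ 2 := by
  have hmem : ∀ t ∈ uIcc 0 x, |t| < 1 := fun t ht => by
    simpa using (abs_sub_left_of_mem_uIcc ht).trans_lt (by simpa using hx)
  have hderiv : ∀ t ∈ uIcc 0 x,
      HasDerivAt (fun t => 2 * arcsin t ^ 2) (4 * (arcsin t / √(1 - t ^ 2))) t := fun t ht => by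
    obtain ⟨h₁, h₂⟩ := abs_lt.1 (hmem t ht)
    refine (((hasDerivAt_arcsin h₁.ne' h₂.ne).pow 2).const_mul 2).congr_deriv ?_
    ring
  rw [integral_eq_sub_of_hasDerivAt hderiv]
  · simp
  refine ContinuousOn.intervalIntegrable fun t ht => ContinuousAt.continuousWithinAt ?_
  have hsqrt : √(1 - t ^ 2) ≠ 0 :=
    sqrt_ne_zero'.2 (sub_pos.2 ((sq_lt_one_iff_abs_lt_one t).2 (hmem t ht)))
  fun_prop (disch := exact hsqrt)

theorem hasSum_two_mul_arcsin_sq {x : ℝ} (hx : |x| < 1) :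
    HasSum (fun m : ℕ => (2 * x) ^ (2 * (m + 1)) / ((m + 1) ^ 2 * centralBinom (m + 1)))
      (2 * arcsin x ^ 2) := by
  rw [← integral_four_mul_arcsin_div_sqrt_one_sub_sq hx]
  have hmem : ∀ t ∈ uIoc 0 x, |t| ≤ |x| := fun t ht => by
    simpa using abs_sub_left_of_mem_uIcc (uIoc_subset_uIcc ht)
  have hsum := hasSum_intervalIntegral_of_norm_le_summable (a := 0) (b := x)
    (F := fun k t => 4 * (4 ^ k / ((2 * k + 1) * centralBinom k) * t ^ (2 * k + 1)))
    (fun k => by fun_prop) ((hasSum_pow_two_mul_add_one (by rwa [abs_abs])).summable.mul_left 4)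
    (fun k t ht => by
      rw [norm_mul, norm_mul, norm_pow, norm_eq_abs, norm_eq_abs, norm_eq_abs, abs_of_pos four_pos,
        abs_of_nonneg (by positivity)]
      gcongr
      calc _ ≤ |t| ^ (2 * k + 1) := mul_le_of_le_one_left (by positivity)
            (four_pow_div_two_mul_add_one_mul_centralBinom_le_one k)
        _ ≤ |x| ^ (2 * k + 1) := pow_le_pow_left₀ (abs_nonneg t) (hmem t ht) _)
    (fun t ht => (hasSum_arcsin_div_sqrt_one_sub_sq ((hmem t ht).trans_lt hx)).mul_left 4)
  refine hsum.congr_fun fun k => ?_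
  have hC := cast_succ_mul_centralBinom_succ k
  have hpos : (0 : ℝ) < centralBinom k := by exact_mod_cast centralBinom_pos k
  have hpos' : (0 : ℝ) < centralBinom (k + 1) := by exact_mod_cast centralBinom_pos (k + 1)
  rw [integral_const_mul, integral_const_mul, integral_pow, zero_pow (by omega), sub_zero,
    pow_mul, mul_pow]
  push_cast
  field_simp
  linear_combination (-((k : ℝ) + 1) * 4 ^ (k + 1) * x ^ (2 * k + 2)) * hC

/-- With τ = (√3 − 1)/2, the series ∑_{m=1}^∞ 2^m·(2 − √3)^m / (m²·C(2m, m)) converges and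
equals 2·(arcsin τ)². -/
theorem lehmer_corrected_p457 :
    HasSum (fun m : ℕ =>
      2 ^ (m + 1) * (2 - Real.sqrt 3) ^ (m + 1) /
        ((m + 1 : ℝ) ^ 2 * (Nat.choose (2 * (m + 1)) (m + 1) : ℝ)))
      (2 * Real.arcsin ((Real.sqrt 3 - 1) / 2) ^ 2) := by
  have h3 : √3 ^ 2 = 3 := sq_sqrt (by norm_num)
  have hτ : |(√3 - 1) / 2| < 1 := by
    rw [abs_lt]; constructor <;> nlinarith [sqrt_nonneg 3]
  have h2τ : (2 * ((√3 - 1) / 2)) ^ 2 = 2 * (2 - √3) := by linear_combination h3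
  refine (hasSum_two_mul_arcsin_sq hτ).congr_fun fun m => ?_
  rw [pow_mul, h2τ, mul_pow, centralBinom_eq_two_mul_choose]
end

section
/- For every real number x with |x| ≤ 1, the series ∑_{m=1}^∞ (2x)^{2m} / (m² · C(2m, m)) converges and equals 2 · (arcsin x)². -/
/-!
Write `c n = 4ⁿ / ((2n+1) C(2n,n))` and `S x = ∑ c n x^(2n+1)`. The recurrence
`(2n+3) c (n+1) = (2n+2) c n` says exactly that `(1 - x²) S' = 1 + x S`, so `√(1 - x²) S`
has derivative `1/√(1 - x²)` and equals `arcsin`. The series of the theorem is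
`∑ 2 c m / (m+1) x^(2m+2)`, whose derivative is `4 S = (2 arcsin²)'`; this proves the identity
on `(-1, 1)`. Finally `(n+1) c n² ≤ 1`, so the coefficients are `O(m^(-3/2))` and the series
converges uniformly on `[-1, 1]`, which carries the identity to the endpoints.
-/

open Real Set Function

section LacunaryPowerSeries

variable {a : ℕ → ℝ} {e : ℕ → ℕ} {C x : ℝ}

lemma summable_natCast_mul_pow_pred_comp (he : Injective e) {r : ℝ} (hr0 : 0 ≤ r)
    (hr : r < 1) : Summable fun n => (e n : ℝ) * r ^ (e n - 1) := by
  have hshift : Summable fun k : ℕ => ((k + 1 : ℕ) : ℝ) * r ^ (k + 1 - 1) := by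
    have h := (summable_pow_mul_geometric_of_norm_lt_one 1
      (by rwa [Real.norm_of_nonneg hr0])).add (summable_geometric_of_lt_one hr0 hr)
    refine h.congr fun k => ?_
    simp only [pow_one, Nat.cast_add, Nat.cast_one, add_tsub_cancel_right]
    ring
  have h : Summable fun k : ℕ => (k : ℝ) * r ^ (k - 1) := (summable_nat_add_iff 1).1 hshift
  exact h.comp_injective he

lemma summable_mul_pow_comp (ha : ∀ n, |a n| ≤ C) (he : Injective e) (hx : |x| < 1) :
    Summable fun n => a n * x ^ e n := by
  refine .of_norm_bounded
    (((summable_geometric_of_abs_lt_one (abs_abs x ▸ hx)).comp_injective he).mul_left C) ?_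
  intro n
  rw [norm_mul, norm_pow, Real.norm_eq_abs, Real.norm_eq_abs]
  exact mul_le_mul_of_nonneg_right (ha n) (by positivity)

lemma abs_mul_natCast_mul_pow_pred_le (ha : ∀ n, |a n| ≤ C) {r y : ℝ} (hy : |y| ≤ r)
    (n : ℕ) :
    |a n * e n * y ^ (e n - 1)| ≤ C * (e n * r ^ (e n - 1)) := by
  rw [abs_mul, abs_mul, abs_pow, Nat.abs_cast, mul_assoc]
  exact mul_le_mul (ha n) (mul_le_mul_of_nonneg_left (pow_le_pow_left₀ (abs_nonneg y) hy _)
    (Nat.cast_nonneg _)) (by positivity) ((abs_nonneg _).trans (ha n))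

lemma summable_mul_natCast_mul_pow_pred_comp (ha : ∀ n, |a n| ≤ C) (he : Injective e)
    (hx : |x| < 1) : Summable fun n => a n * e n * x ^ (e n - 1) :=
  .of_norm_bounded ((summable_natCast_mul_pow_pred_comp he (abs_nonneg x) hx).mul_left C)
    (abs_mul_natCast_mul_pow_pred_le ha le_rfl)

theorem hasDerivAt_tsum_mul_pow_comp (ha : ∀ n, |a n| ≤ C) (he : Injective e)
    (hx : |x| < 1) :
    HasDerivAt (fun y => ∑' n, a n * y ^ e n) (∑' n, a n * e n * x ^ (e n - 1)) x := by
  obtain ⟨r, hxr, hr1⟩ := exists_between hx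
  have hmem : x ∈ Ioo (-r) r := abs_lt.1 hxr
  exact hasDerivAt_tsum_of_isPreconnected
    ((summable_natCast_mul_pow_pred_comp he ((abs_nonneg x).trans hxr.le) hr1).mul_left C)
    isOpen_Ioo isPreconnected_Ioo
    (fun n y _ => ((hasDerivAt_pow (e n) y).const_mul (a n)).congr_deriv (mul_assoc _ _ _).symm)
    (fun n y hy => abs_mul_natCast_mul_pow_pred_le ha (abs_le.2 ⟨hy.1.le, hy.2.le⟩) n)
    hmem (summable_mul_pow_comp ha he hx) hmem

end LacunaryPowerSeries

lemma eqOn_Ioo_of_hasDerivAt {f g f' : ℝ → ℝ} {a b x₀ : ℝ}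
    (hf : ∀ y ∈ Ioo a b, HasDerivAt f (f' y) y) (hg : ∀ y ∈ Ioo a b, HasDerivAt g (f' y) y)
    (hx₀ : x₀ ∈ Ioo a b) (h : f x₀ = g x₀) : EqOn f g (Ioo a b) :=
  isOpen_Ioo.eqOn_of_deriv_eq isPreconnected_Ioo
    (fun y hy => (hf y hy).differentiableAt.differentiableWithinAt)
    (fun y hy => (hg y hy).differentiableAt.differentiableWithinAt)
    (fun y hy => (hf y hy).deriv.trans (hg y hy).deriv.symm) hx₀ h

/-- `(2n)!! / (2n+1)!!` -/
noncomputable def wallisRatio (n : ℕ) : ℝ := 4 ^ n / ((2 * n + 1) * n.centralBinom)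

lemma wallisRatio_zero : wallisRatio 0 = 1 := by simp [wallisRatio]

lemma wallisRatio_pos (n : ℕ) : 0 < wallisRatio n := by
  unfold wallisRatio
  have := Nat.centralBinom_pos n
  positivity

lemma succ_mul_centralBinom_succ_real (n : ℕ) :
    ((n : ℝ) + 1) * (n + 1).centralBinom = 2 * (2 * n + 1) * n.centralBinom := by
  exact_mod_cast n.succ_mul_centralBinom_succ

lemma wallisRatio_succ (n : ℕ) :
    (2 * n + 3) * wallisRatio (n + 1) = (2 * n + 2) * wallisRatio n := by
  have h := succ_mul_centralBinom_succ_real n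
  have h0 : (n.centralBinom : ℝ) ≠ 0 := Nat.cast_ne_zero.2 n.centralBinom_ne_zero
  have h1 : ((n + 1).centralBinom : ℝ) ≠ 0 := Nat.cast_ne_zero.2 (n + 1).centralBinom_ne_zero
  unfold wallisRatio
  push_cast at h ⊢
  field_simp
  linear_combination (-2 * (2 * n + 3) * 4 ^ n : ℝ) * h

lemma succ_mul_wallisRatio_sq_le_one (n : ℕ) : (n + 1) * wallisRatio n ^ 2 ≤ 1 := by
  induction n with
  | zero => simp [wallisRatio_zero]
  | succ n ih =>
    have hrec : wallisRatio (n + 1) = (2 * n + 2) / (2 * n + 3) * wallisRatio n := by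
      rw [div_mul_eq_mul_div, eq_div_iff (by positivity), ← wallisRatio_succ]; ring
    rw [hrec, mul_pow, ← mul_assoc]
    calc ((n + 1 : ℕ) + 1 : ℝ) * ((2 * n + 2) / (2 * n + 3)) ^ 2 * wallisRatio n ^ 2
        ≤ (n + 1) * wallisRatio n ^ 2 := by
          gcongr
          rw [div_pow, mul_div_assoc', div_le_iff₀ (by positivity)]
          push_cast
          nlinarith
      _ ≤ 1 := ih

lemma wallisRatio_le_one (n : ℕ) : wallisRatio n ≤ 1 := by
  have h := succ_mul_wallisRatio_sq_le_one n
  have h0 := wallisRatio_pos n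
  nlinarith [sq_nonneg (wallisRatio n), (n.cast_nonneg : (0 : ℝ) ≤ n)]

lemma abs_wallisRatio_le_one (n : ℕ) : |wallisRatio n| ≤ 1 :=
  (abs_of_pos (wallisRatio_pos n)).symm ▸ wallisRatio_le_one n

noncomputable def wallisSeries (x : ℝ) : ℝ := ∑' n, wallisRatio n * x ^ (2 * n + 1)

lemma wallisSeries_zero : wallisSeries 0 = 0 := by simp [wallisSeries]

lemma injective_two_mul_add_one : Injective fun n : ℕ => 2 * n + 1 := fun _ _ h => by
  simp only at h; omega

lemma one_sub_sq_mul_tsum_wallisRatio {x : ℝ} (hx : |x| < 1) :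
    (1 - x ^ 2) * ∑' n, wallisRatio n * (2 * n + 1) * x ^ (2 * n) = 1 + x * wallisSeries x := by
  have hD := (summable_mul_natCast_mul_pow_pred_comp abs_wallisRatio_le_one
    injective_two_mul_add_one hx).hasSum
  have hS := (summable_mul_pow_comp abs_wallisRatio_le_one injective_two_mul_add_one hx).hasSum
  simp only [Nat.cast_add, Nat.cast_mul, Nat.cast_ofNat, Nat.cast_one, add_tsub_cancel_right]
    at hD
  set D := ∑' n, wallisRatio n * (2 * n + 1) * x ^ (2 * n)
  have hshift : HasSum (fun n => wallisRatio (n + 1) * (2 * (n + 1 : ℕ) + 1) * x ^ (2 * (n + 1)))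
      (x ^ 2 * D + x * wallisSeries x) := by
    refine ((hD.mul_left (x ^ 2)).add (hS.mul_left x)).congr_fun fun n => ?_
    push_cast
    linear_combination x ^ (2 * n + 2) * wallisRatio_succ n
  have hD_succ := (hasSum_nat_add_iff' 1).2 hD
  simp only [Finset.range_one, Finset.sum_singleton, wallisRatio_zero, Nat.cast_zero, mul_zero,
    zero_add, pow_zero, mul_one] at hD_succ
  linarith [hD_succ.unique hshift]

lemma hasDerivAt_wallisSeries {x : ℝ} (hx : |x| < 1) :
    HasDerivAt wallisSeries ((1 + x * wallisSeries x) / (1 - x ^ 2)) x := by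
  have h := hasDerivAt_tsum_mul_pow_comp abs_wallisRatio_le_one injective_two_mul_add_one hx
  have hx2 : 1 - x ^ 2 ≠ 0 := by nlinarith [abs_lt.1 hx]
  rw [← one_sub_sq_mul_tsum_wallisRatio hx, mul_div_cancel_left₀ _ hx2]
  push_cast at h
  exact h

lemma sqrt_one_sub_sq_mul_wallisSeries {x : ℝ} (hx : |x| < 1) :
    √(1 - x ^ 2) * wallisSeries x = arcsin x := by
  refine eqOn_Ioo_of_hasDerivAt (f := fun y => √(1 - y ^ 2) * wallisSeries y)
    (f' := fun y => 1 / √(1 - y ^ 2)) (fun y hy => ?_)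
    (fun y hy => hasDerivAt_arcsin hy.1.ne' hy.2.ne) (by norm_num : (0 : ℝ) ∈ Ioo (-1) 1)
    (by simp [wallisSeries_zero]) (abs_lt.1 hx)
  have hy2 : 0 < 1 - y ^ 2 := by nlinarith [hy.1, hy.2]
  have hsqrt := ((hasDerivAt_pow 2 y).const_sub 1).sqrt hy2.ne'
  refine (hsqrt.mul (hasDerivAt_wallisSeries (abs_lt.2 hy))).congr_deriv ?_
  have hs := Real.sq_sqrt hy2.le
  have hs0 := Real.sqrt_pos.2 hy2
  field_simp
  linear_combination (2 * y * wallisSeries y + 2) * hs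

lemma wallisRatio_div_succ_le (n : ℕ) :
    wallisRatio n / (n + 1) ≤ 1 / ((n + 1 : ℝ) ^ (3 / 2 : ℝ)) := by
  have hn : (0 : ℝ) < n + 1 := by positivity
  have hmul : wallisRatio n * √(n + 1) ≤ 1 := by
    refine abs_le_of_sq_le_sq' ?_ zero_le_one |>.2
    rw [mul_pow, Real.sq_sqrt hn.le, one_pow, mul_comm]
    exact succ_mul_wallisRatio_sq_le_one n
  rw [show (3 / 2 : ℝ) = 1 + 1 / 2 by norm_num, Real.rpow_add hn, Real.rpow_one,
    ← Real.sqrt_eq_rpow, div_le_div_iff₀ hn (by positivity)]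
  nlinarith

lemma summable_wallisRatio_div_succ : Summable fun n : ℕ => wallisRatio n / (n + 1) := by
  have h := (Real.summable_one_div_nat_add_rpow 1 (3 / 2)).2 (by norm_num)
  refine .of_nonneg_of_le (fun n => by have := wallisRatio_pos n; positivity) (fun n => ?_) h
  rw [abs_of_pos (by positivity)]
  exact wallisRatio_div_succ_le n

lemma injective_two_mul_succ : Injective fun m : ℕ => 2 * (m + 1) := fun _ _ h => by
  simp only at h; omega

lemma abs_two_mul_wallisRatio_div_succ_le (m : ℕ) : |2 * wallisRatio m / (m + 1)| ≤ 2 := by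
  have h0 := wallisRatio_pos m
  rw [abs_of_pos (by positivity), div_le_iff₀ (by positivity)]
  nlinarith [wallisRatio_le_one m, (m.cast_nonneg : (0 : ℝ) ≤ m)]

lemma tsum_two_mul_wallisRatio_div_succ_mul_pow {x : ℝ} (hx : |x| < 1) :
    ∑' m, 2 * wallisRatio m / (m + 1) * x ^ (2 * (m + 1)) = 2 * arcsin x ^ 2 := by
  refine eqOn_Ioo_of_hasDerivAt
    (f := fun y => ∑' m, 2 * wallisRatio m / (m + 1) * y ^ (2 * (m + 1)))
    (g := fun y => 2 * arcsin y ^ 2)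
    (f' := fun y => 4 * (arcsin y / √(1 - y ^ 2))) (fun y hy => ?_) (fun y hy => ?_)
    (by norm_num : (0 : ℝ) ∈ Ioo (-1) 1) (by simp) (abs_lt.1 hx)
  · have hy' : |y| < 1 := abs_lt.2 hy
    have hy2 : 0 < 1 - y ^ 2 := by nlinarith [hy.1, hy.2]
    have h := hasDerivAt_tsum_mul_pow_comp abs_two_mul_wallisRatio_div_succ_le
      injective_two_mul_succ hy'
    rw [← sqrt_one_sub_sq_mul_wallisSeries hy', mul_div_cancel_left₀ _ (by positivity)]
    refine h.congr_deriv ?_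
    rw [wallisSeries, ← tsum_mul_left]
    refine tsum_congr fun m => ?_
    rw [show 2 * (m + 1) - 1 = 2 * m + 1 by omega]
    push_cast
    field_simp
    ring
  · refine (((hasDerivAt_arcsin hy.1.ne' hy.2.ne).pow 2).const_mul 2).congr_deriv ?_
    simp only [Nat.cast_ofNat]
    ring

lemma abs_two_mul_wallisRatio_div_succ_mul_pow_le {x : ℝ} (hx : |x| ≤ 1) (m : ℕ) :
    |2 * wallisRatio m / (m + 1) * x ^ (2 * (m + 1))| ≤ 2 * (wallisRatio m / (m + 1)) := by
  have h0 := wallisRatio_pos m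
  rw [abs_mul, abs_pow, abs_of_pos (by positivity), mul_div_assoc]
  exact mul_le_of_le_one_right (by positivity) (pow_le_one₀ (abs_nonneg x) hx)

theorem hasSum_two_mul_wallisRatio_div_succ_mul_pow {x : ℝ} (hx : |x| ≤ 1) :
    HasSum (fun m => 2 * wallisRatio m / (m + 1) * x ^ (2 * (m + 1))) (2 * arcsin x ^ 2) := by
  have hbound := summable_wallisRatio_div_succ.mul_left 2
  refine (Summable.of_norm_bounded hbound
    (abs_two_mul_wallisRatio_div_succ_mul_pow_le hx)).hasSum_iff.2 ?_
  refine EqOn.of_subset_closure (s := Ioo (-1) 1)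
    (fun y hy => tsum_two_mul_wallisRatio_div_succ_mul_pow (abs_lt.2 hy))
    (continuousOn_tsum (fun m => (continuous_const.mul (continuous_pow _)).continuousOn) hbound
      fun m y hy => abs_two_mul_wallisRatio_div_succ_mul_pow_le (abs_le.2 hy) m)
    (continuous_const.mul (continuous_arcsin.pow 2)).continuousOn Ioo_subset_Icc_self
    (closure_Ioo (by norm_num)).ge (abs_le.1 hx)

lemma pow_div_sq_mul_choose_eq (x : ℝ) (m : ℕ) :
    (2 * x) ^ (2 * (m + 1)) / ((m + 1 : ℝ) ^ 2 * ((2 * (m + 1)).choose (m + 1) : ℝ)) =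
      2 * wallisRatio m / (m + 1) * x ^ (2 * (m + 1)) := by
  have h := succ_mul_centralBinom_succ_real m
  have h0 : (m.centralBinom : ℝ) ≠ 0 := Nat.cast_ne_zero.2 m.centralBinom_ne_zero
  have h1 : ((m + 1).centralBinom : ℝ) ≠ 0 := Nat.cast_ne_zero.2 (m + 1).centralBinom_ne_zero
  rw [← Nat.centralBinom_eq_two_mul_choose, wallisRatio, mul_pow, pow_mul 2]
  field_simp
  linear_combination (-2 * 4 ^ m * x ^ (2 * (m + 1))) * h

/-- Lehmer's equation (13): for every real x with |x| ≤ 1, the series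
∑_{m=1}^∞ (2x)^{2m} / (m²·C(2m, m)) converges and equals 2·(arcsin x)². -/
theorem lehmer_eq13 (x : ℝ) (hx : |x| ≤ 1) :
    HasSum (fun m : ℕ =>
      (2 * x) ^ (2 * (m + 1)) /
        ((m + 1 : ℝ) ^ 2 * (Nat.choose (2 * (m + 1)) (m + 1) : ℝ)))
      (2 * Real.arcsin x ^ 2) := by
  simpa only [pow_div_sq_mul_choose_eq] using hasSum_two_mul_wallisRatio_div_succ_mul_pow hx
end
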